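/- arXiv:2510.01555 — 4 statements merged into one kernel-verified Lean document; each statement's English description precedes it below -/
import Mathlib

section
/- Let Y be a finite type, E a real normed vector space, π : E → Y → ℝ a parameterized policy (π θ y > 0, ∑_y π θ y = 1, each θ ↦ π θ y differentiable), and π_ref : Y → ℝ a fixed reference distribution with π_ref y > 0 for all y. Fix θ₀ ∈ E and define the 'k₂ as loss' objective with on-policy sampling from the detached snapshot: J_{k₂}(θ) = ∑_y π θ₀ y * (1/2) * (log (π θ y / π_ref y))². Then the Fréchet derivative of J_{k₂} at θ = θ₀ equals ∑_y π θ₀ y • (log (π θ₀ y / π_ref y) • D(log π_(·) y)(θ₀)), which is exactly the Fréchet derivative at θ₀ of the reverse KL objective ∑_y π θ y * log (π θ y / π_ref y). (On-policy gradient equivalence of 'k₁ in reward' and 'k₂ as loss' with the true reverse-KL gradient; main theorem.) -/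
/-!
On-policy, the detached weight `π θ₀ y` cancels the factor `(π θ₀ y)⁻¹` of the score, so the
`k₂` gradient is `∑ y, log (π θ₀ y / π_ref y) • ∇π θ₀ y`. The reverse-KL gradient is the same sum
plus `∑ y, ∇π θ₀ y`, which vanishes because `∑ y, π θ y = 1` for every `θ`.
-/

section
variable {E : Type*} [NormedAddCommGroup E] [NormedSpace ℝ E] {f g : E → ℝ}
  {f' g' : E →L[ℝ] ℝ} {x : E}

theorem HasFDerivAt.log_div_const (hf : HasFDerivAt f f' x) (hx : f x ≠ 0) {c : ℝ}
    (hc : c ≠ 0) : HasFDerivAt (fun θ => Real.log (f θ / c)) ((f x)⁻¹ • f') x := by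
  have hquot : HasFDerivAt (fun θ => f θ / c) (c⁻¹ • f') x := by
    simpa only [div_eq_mul_inv] using hf.mul_const c⁻¹
  refine (hquot.log (div_ne_zero hx hc)).congr_fderiv ?_
  rw [smul_smul, inv_div]
  field_simp

theorem HasFDerivAt.half_mul_sq (hg : HasFDerivAt g g' x) :
    HasFDerivAt (fun θ => (1 / 2) * g θ ^ 2) (g x • g') x := by
  refine ((hg.pow 2).const_mul (1 / 2)).congr_fderiv ?_
  rw [smul_smul, nsmul_eq_mul, pow_one]
  ring_nf

theorem HasFDerivAt.mul_log_div_const (hf : HasFDerivAt f f' x) (hx : f x ≠ 0) {c : ℝ}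
    (hc : c ≠ 0) :
    HasFDerivAt (fun θ => f θ * Real.log (f θ / c)) (f' + Real.log (f x / c) • f') x := by
  refine (hf.mul (hf.log_div_const hx hc)).congr_fderiv ?_
  rw [smul_inv_smul₀ hx, add_comm]

theorem sum_fderiv_eq_zero_of_sum_eq_const {ι : Type*} (s : Finset ι) (p : E → ι → ℝ)
    (hp : ∀ i ∈ s, DifferentiableAt ℝ (fun θ => p θ i) x) {C : ℝ}
    (hsum : ∀ θ, ∑ i ∈ s, p θ i = C) :
    ∑ i ∈ s, fderiv ℝ (fun θ => p θ i) x = 0 := by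
  rw [← fderiv_fun_sum hp, funext hsum, fderiv_const_apply]

end

/-- On-policy gradient equivalence of `k₂ as loss` with the true reverse-KL gradient:
the Fréchet derivative at `θ₀` of the on-policy `k₂` objective equals the score-function
form with the `k₁` coefficient, which is exactly the Fréchet derivative at `θ₀` of the
reverse KL objective. -/
theorem k2_as_loss_gradient_equivalence
    {Y : Type*} [Fintype Y] {E : Type*} [NormedAddCommGroup E] [NormedSpace ℝ E]
    (π : E → Y → ℝ)
    (hpos : ∀ θ y, 0 < π θ y)
    (hsum : ∀ θ, ∑ y, π θ y = 1)
    (hdiff : ∀ y, Differentiable ℝ (fun θ => π θ y))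
    (π_ref : Y → ℝ) (href : ∀ y, 0 < π_ref y)
    (θ₀ : E) :
    fderiv ℝ (fun θ => ∑ y, π θ₀ y * ((1/2) * (Real.log (π θ y / π_ref y))^2)) θ₀
        = ∑ y, π θ₀ y •
            (Real.log (π θ₀ y / π_ref y) • fderiv ℝ (fun θ => Real.log (π θ y)) θ₀) ∧
    fderiv ℝ (fun θ => ∑ y, π θ₀ y * ((1/2) * (Real.log (π θ y / π_ref y))^2)) θ₀
        = fderiv ℝ (fun θ => ∑ y, π θ y * Real.log (π θ y / π_ref y)) θ₀ := by
  have hπ y : HasFDerivAt (fun θ => π θ y) (fderiv ℝ (fun θ => π θ y) θ₀) θ₀ :=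
    (hdiff y θ₀).hasFDerivAt
  have hscore y : fderiv ℝ (fun θ => Real.log (π θ y)) θ₀
      = (π θ₀ y)⁻¹ • fderiv ℝ (fun θ => π θ y) θ₀ :=
    ((hπ y).log (hpos θ₀ y).ne').fderiv
  have hk2 := HasFDerivAt.fun_sum (u := Finset.univ) fun y _ =>
    (((hπ y).log_div_const (hpos θ₀ y).ne' (href y).ne').half_mul_sq).const_mul (π θ₀ y)
  have hKL := HasFDerivAt.fun_sum (u := Finset.univ) fun y _ =>
    (hπ y).mul_log_div_const (hpos θ₀ y).ne' (href y).ne'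
  refine ⟨by simp only [hk2.fderiv, hscore], ?_⟩
  rw [hk2.fderiv, hKL.fderiv, Finset.sum_add_distrib,
    sum_fderiv_eq_zero_of_sum_eq_const _ π (fun y _ => hdiff y θ₀) hsum, zero_add]
  simp only [smul_comm (π θ₀ _) (Real.log _), smul_inv_smul₀ (hpos θ₀ _).ne']
end

section
/- Let Y be a finite type, E a real normed vector space, π : E → Y → ℝ a parameterized policy (π θ y > 0, ∑_y π θ y = 1, each θ ↦ π θ y differentiable), and π_ref : Y → ℝ a fixed reference distribution with π_ref y > 0 for all y. Fix θ₀ ∈ E and define the 'k₃ as loss' objective with on-policy sampling from the detached snapshot: J_{k₃}(θ) = ∑_y π θ₀ y * (π_ref y / π θ y − 1 − log (π_ref y / π θ y)). Then the Fréchet derivative of J_{k₃} at θ = θ₀ equals ∑_y π θ₀ y • ((1 − π_ref y / π θ₀ y) • D(log π_(·) y)(θ₀)); that is, 'k₃ as loss' is gradient-equivalent to an 'in reward' update with the detached coefficient k₃' = 1 − π_ref/π_θ. -/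
/-!
For a constant `c ≠ 0`, the scalar function `s ↦ c / s - 1 - log (c / s)` has derivative
`(1 - c / s) / s`; composed with `θ ↦ π θ y`, the factor `(π θ₀ y)⁻¹ • Dπ` is exactly the score
`D(log π(·) y)(θ₀)`. The detached weights `π θ₀ y` are constants, so the derivative passes
through the finite sum term by term.
-/

theorem hasDerivAt_div_sub_one_sub_log_div {c r : ℝ} (hc : c ≠ 0) (hr : r ≠ 0) :
    HasDerivAt (fun s => c / s - 1 - Real.log (c / s)) ((1 - c / r) * r⁻¹) r := by
  have hdiv : HasDerivAt (fun s => c / s) (-c / r ^ 2) r := by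
    simpa [div_eq_mul_inv, neg_div, mul_neg] using (hasDerivAt_inv hr).const_mul c
  refine ((hdiv.sub_const 1).fun_sub (hdiv.log (div_ne_zero hc hr))).congr_deriv ?_
  field_simp
  ring

theorem HasFDerivAt.div_sub_one_sub_log_div {E : Type*} [NormedAddCommGroup E] [NormedSpace ℝ E]
    {f : E → ℝ} {f' : E →L[ℝ] ℝ} {x : E} {c : ℝ} (hf : HasFDerivAt f f' x) (hc : c ≠ 0)
    (hx : f x ≠ 0) :
    HasFDerivAt (fun θ => c / f θ - 1 - Real.log (c / f θ)) ((1 - c / f x) • (f x)⁻¹ • f') x := by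
  rw [smul_smul]
  exact (hasDerivAt_div_sub_one_sub_log_div hc hx).comp_hasFDerivAt x hf

theorem k3_as_loss_gradient_general
    {Y : Type*} [Fintype Y] {E : Type*} [NormedAddCommGroup E] [NormedSpace ℝ E]
    (π : E → Y → ℝ)
    (hpos : ∀ θ y, 0 < π θ y)
    (hdiff : ∀ y, Differentiable ℝ (fun θ => π θ y))
    (π_ref : Y → ℝ) (href : ∀ y, 0 < π_ref y)
    (θ₀ : E) :
    fderiv ℝ
        (fun θ => ∑ y, π θ₀ y * (π_ref y / π θ y - 1 - Real.log (π_ref y / π θ y))) θ₀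
      = ∑ y, π θ₀ y •
          ((1 - π_ref y / π θ₀ y) • fderiv ℝ (fun θ => Real.log (π θ y)) θ₀) := by
  refine (HasFDerivAt.fun_sum fun y _ => ?_).fderiv
  have hπ : HasFDerivAt (fun θ => π θ y) (fderiv ℝ (fun θ => π θ y) θ₀) θ₀ :=
    (hdiff y θ₀).hasFDerivAt
  have hne : π θ₀ y ≠ 0 := (hpos θ₀ y).ne'
  rw [(hπ.log hne).fderiv]
  exact (hπ.div_sub_one_sub_log_div (href y).ne' hne).const_mul (π θ₀ y)

/-- `k₃ as loss` is gradient-equivalent (on-policy) to an `in reward` update with the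
detached coefficient `k₃' = 1 − π_ref/π_θ`. -/
theorem k3_as_loss_gradient
    {Y : Type*} [Fintype Y] {E : Type*} [NormedAddCommGroup E] [NormedSpace ℝ E]
    (π : E → Y → ℝ)
    (hpos : ∀ θ y, 0 < π θ y)
    (hsum : ∀ θ, ∑ y, π θ y = 1)
    (hdiff : ∀ y, Differentiable ℝ (fun θ => π θ y))
    (π_ref : Y → ℝ) (href : ∀ y, 0 < π_ref y)
    (θ₀ : E) :
    fderiv ℝ
        (fun θ => ∑ y, π θ₀ y * (π_ref y / π θ y - 1 - Real.log (π_ref y / π θ y))) θ₀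
      = ∑ y, π θ₀ y •
          ((1 - π_ref y / π θ₀ y) • fderiv ℝ (fun θ => Real.log (π θ y)) θ₀) :=
  k3_as_loss_gradient_general π hpos hdiff π_ref href θ₀
end

section
/- Let p be the Gaussian density with mean μ_p and standard deviation σ_p > 0 and q the Gaussian density with mean μ_q and standard deviation σ_q > 0 on ℝ. Then the second moment of the importance ratio under q, namely the function x ↦ (p x)² / (q x) = (p x / q x)² * q x, is Lebesgue integrable on ℝ if and only if 2σ_q² > σ_p². (Finite variance of the k₃ estimator for Gaussians requires the sampling distribution to be sufficiently wide.) -/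
open MeasureTheory Real

/-- The Gaussian density with mean `μ` and standard deviation `σ`. -/
noncomputable def gaussianDensity (μ σ : ℝ) : ℝ → ℝ :=
  fun x => (1 / (σ * Real.sqrt (2 * Real.pi))) * Real.exp (-(x - μ)^2 / (2 * σ^2))

/- Both densities are `p(0) · exp (-x²/(2σ²) + μx/σ²)`, so `p²/q` is a positive constant times
`exp (-b x² + c x)` with `b = 1/σ_p² - 1/(2σ_q²)`. Such a function is integrable iff `b > 0`:
for `b > 0` complete the square; for `b ≤ 0` the sum of the function and its reflection
`x ↦ -x` dominates the non-integrable `exp (-b x²)`. -/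

lemma exp_le_exp_add_add_exp_sub (a y : ℝ) : exp a ≤ exp (a + y) + exp (a - y) := by
  rcases le_total 0 y with hy | hy
  · linarith [exp_le_exp.2 (le_add_of_nonneg_right hy : a ≤ a + y), exp_pos (a - y)]
  · linarith [exp_le_exp.2 (le_sub_self_iff a |>.2 hy : a ≤ a - y), exp_pos (a + y)]

lemma integrable_exp_neg_mul_sq_add_mul {b : ℝ} (hb : 0 < b) (c : ℝ) :
    Integrable fun x : ℝ => exp (-b * x ^ 2 + c * x) := by
  refine (((integrable_exp_neg_mul_sq hb).comp_sub_right (c / (2 * b))).const_mul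
    (exp (c ^ 2 / (4 * b)))).congr (.of_forall fun x => ?_)
  simp only [← exp_add]
  congr 1
  field_simp
  ring

lemma integrable_exp_neg_mul_sq_add_mul_iff (b c : ℝ) :
    (Integrable fun x : ℝ => exp (-b * x ^ 2 + c * x)) ↔ 0 < b := by
  refine ⟨fun h => integrable_exp_neg_mul_sq_iff.1 ?_,
    fun hb => integrable_exp_neg_mul_sq_add_mul hb c⟩
  refine (h.add h.comp_neg).mono' (by fun_prop) (.of_forall fun x => ?_)
  rw [norm_of_nonneg (exp_pos _).le]
  calc exp (-b * x ^ 2) ≤ exp (-b * x ^ 2 + c * x) + exp (-b * x ^ 2 - c * x) :=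
        exp_le_exp_add_add_exp_sub _ _
    _ = _ := by simp only [Pi.add_apply, neg_sq, mul_neg, sub_eq_add_neg]

lemma gaussianDensity_pos (μ : ℝ) {σ : ℝ} (hσ : 0 < σ) (x : ℝ) : 0 < gaussianDensity μ σ x := by
  unfold gaussianDensity
  positivity

lemma gaussianDensity_eq_mul_exp (μ : ℝ) {σ : ℝ} (hσ : σ ≠ 0) (x : ℝ) :
    gaussianDensity μ σ x = gaussianDensity μ σ 0 * exp (-x ^ 2 / (2 * σ ^ 2) + μ / σ ^ 2 * x) := by
  simp only [gaussianDensity, mul_assoc, ← exp_add]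
  congr 2
  field_simp
  ring

lemma gaussianDensity_sq_div_gaussianDensity (μp μq : ℝ) {σp σq : ℝ} (hσp : σp ≠ 0)
    (hσq : σq ≠ 0) (x : ℝ) :
    gaussianDensity μp σp x ^ 2 / gaussianDensity μq σq x =
      gaussianDensity μp σp 0 ^ 2 / gaussianDensity μq σq 0 *
        exp (-(1 / σp ^ 2 - 1 / (2 * σq ^ 2)) * x ^ 2 + (2 * μp / σp ^ 2 - μq / σq ^ 2) * x) := by
  rw [gaussianDensity_eq_mul_exp μp hσp, gaussianDensity_eq_mul_exp μq hσq, mul_pow,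
    mul_div_mul_comm, ← exp_nat_mul, ← exp_sub]
  congr 2
  field_simp
  ring

/-- For Gaussians `p = N(μ_p, σ_p²)` and `q = N(μ_q, σ_q²)`, the second moment of the
importance ratio under `q`, i.e. `x ↦ (p x)² / q x`, is Lebesgue integrable on `ℝ`
if and only if `2σ_q² > σ_p²`. -/
theorem gaussian_k3_second_moment_finite_iff
    (μp μq σp σq : ℝ) (hσp : 0 < σp) (hσq : 0 < σq) :
    Integrable (fun x : ℝ => (gaussianDensity μp σp x)^2 / gaussianDensity μq σq x)
      ↔ 2 * σq^2 > σp^2 := by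
  have hK : gaussianDensity μp σp 0 ^ 2 / gaussianDensity μq σq 0 ≠ 0 :=
    (div_pos (pow_pos (gaussianDensity_pos μp hσp 0) 2) (gaussianDensity_pos μq hσq 0)).ne'
  rw [funext (gaussianDensity_sq_div_gaussianDensity μp μq hσp.ne' hσq.ne'),
    integrable_const_mul_iff hK.isUnit, integrable_exp_neg_mul_sq_add_mul_iff, sub_pos,
    one_div_lt_one_div (by positivity) (by positivity)]
end

section
/- Let Y be a finite type, E a real normed vector space, π : E → Y → ℝ a parameterized policy (π θ y > 0, ∑_y π θ y = 1, each θ ↦ π θ y differentiable), π_ref : Y → ℝ strictly positive, and ψ : ℝ → ℝ differentiable. Fix θ₀ ∈ E and define the general 'as loss' objective with on-policy sampling: J_ψ(θ) = ∑_y π θ₀ y * ψ(log (π θ y) − log (π_ref y)). Then its Fréchet derivative at θ = θ₀ equals the 'in reward' form with detached coefficient ψ'(log π θ₀ y − log π_ref y): D J_ψ(θ₀) = ∑_y π θ₀ y • (ψ'(log (π θ₀ y) − log (π_ref y)) • D(log π_(·) y)(θ₀)). (Every 'k_n as loss' head equals a 'k_{n'} in reward' head under on-policy sampling, with k_{n'}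 the derivative of the penalty with respect to the log-probability.) -/
/-! Differentiating `θ ↦ ∑ y, w y * ψ (g y θ)` with the weights `w` held fixed is linear in the
summands, and the chain rule turns each `ψ ∘ g y` into `ψ' (g y θ₀) • D (g y) θ₀`. With
`w = π θ₀` and `g y = log π_(·) y − log π_ref y`, whose derivative is the score, this is the
"in reward" form. -/

theorem hasFDerivAt_sum_mul_comp {𝕜 Y E : Type*} [NontriviallyNormedField 𝕜]
    [NormedAddCommGroup E] [NormedSpace 𝕜 E] (s : Finset Y)
    (w : Y → 𝕜) (ψ : 𝕜 → 𝕜) (g : Y → E → 𝕜) (g' : Y → E →L[𝕜] 𝕜) (θ₀ : E)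
    (hψ : ∀ y ∈ s, DifferentiableAt 𝕜 ψ (g y θ₀)) (hg : ∀ y ∈ s, HasFDerivAt (g y) (g' y) θ₀) :
    HasFDerivAt (fun θ => ∑ y ∈ s, w y * ψ (g y θ))
      (∑ y ∈ s, w y • (deriv ψ (g y θ₀) • g' y)) θ₀ :=
  HasFDerivAt.fun_sum fun y hy =>
    ((hψ y hy).hasDerivAt.comp_hasFDerivAt θ₀ (hg y hy)).const_mul (w y)

theorem as_loss_equals_in_reward_general
    {Y : Type*} [Fintype Y] {E : Type*} [NormedAddCommGroup E] [NormedSpace ℝ E]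
    (π : E → Y → ℝ)
    (hpos : ∀ θ y, 0 < π θ y)
    (hdiff : ∀ y, Differentiable ℝ (fun θ => π θ y))
    (π_ref : Y → ℝ)
    (ψ : ℝ → ℝ) (hψ : Differentiable ℝ ψ)
    (θ₀ : E) :
    fderiv ℝ (fun θ => ∑ y, π θ₀ y * ψ (Real.log (π θ y) - Real.log (π_ref y))) θ₀
      = ∑ y, π θ₀ y •
          (deriv ψ (Real.log (π θ₀ y) - Real.log (π_ref y)) •
            fderiv ℝ (fun θ => Real.log (π θ y)) θ₀) := by
  have hscore : ∀ y, HasFDerivAt (fun θ => Real.log (π θ y) - Real.log (π_ref y))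
      (fderiv ℝ (fun θ => Real.log (π θ y)) θ₀) θ₀ := fun y =>
    (((hdiff y θ₀).log (hpos θ₀ y).ne').hasFDerivAt).sub_const _
  exact (hasFDerivAt_sum_mul_comp Finset.univ (π θ₀) ψ _ _ θ₀
    (fun _ _ => hψ _) fun y _ => hscore y).fderiv

/-- Every `k_n as loss` head equals a `k_{n'} in reward` head under on-policy sampling:
for a differentiable penalty `ψ` of the log-ratio, the Fréchet derivative at `θ₀` of
the on-policy `as loss` objective equals the score-function form with detached
coefficient `ψ'(log π θ₀ − log π_ref)`. -/
theorem as_loss_equals_in_reward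
    {Y : Type*} [Fintype Y] {E : Type*} [NormedAddCommGroup E] [NormedSpace ℝ E]
    (π : E → Y → ℝ)
    (hpos : ∀ θ y, 0 < π θ y)
    (hsum : ∀ θ, ∑ y, π θ y = 1)
    (hdiff : ∀ y, Differentiable ℝ (fun θ => π θ y))
    (π_ref : Y → ℝ) (href : ∀ y, 0 < π_ref y)
    (ψ : ℝ → ℝ) (hψ : Differentiable ℝ ψ)
    (θ₀ : E) :
    fderiv ℝ (fun θ => ∑ y, π θ₀ y * ψ (Real.log (π θ y) - Real.log (π_ref y))) θ₀
      = ∑ y, π θ₀ y •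
          (deriv ψ (Real.log (π θ₀ y) - Real.log (π_ref y)) •
            fderiv ℝ (fun θ => Real.log (π θ y)) θ₀) :=
  as_loss_equals_in_reward_general π hpos hdiff π_ref ψ hψ θ₀
end
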